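/- Let φ: B_n × F_n → T be a 1-cocycle for Artin's representation α. Then for all 1 ≤ i ≤ n−2, φ(s_i, x_i)·φ(s_i, x_{i+1}) = φ(s_{i+1}, x_{i+1})·φ(s_{i+1}, x_{i+2}); in other words, the quantity φ(s_i, x_i)φ(s_i, x_{i+1}) takes the same value for all 1 ≤ i ≤ n−1. -/
import Mathlib


/-- The braid relations on `m` generators `s_0, …, s_{m-1}`. -/
def braidRels (m : ℕ) : Set (FreeGroup (Fin m)) :=
  { r | (∃ i j : Fin m, (i : ℕ) + 1 = (j : ℕ) ∧
          r = FreeGroup.of i * FreeGroup.of j * FreeGroup.of i *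
              (FreeGroup.of j * FreeGroup.of i * FreeGroup.of j)⁻¹) ∨
        (∃ i j : Fin m, (i : ℕ) + 2 ≤ (j : ℕ) ∧
          r = FreeGroup.of i * FreeGroup.of j * (FreeGroup.of j * FreeGroup.of i)⁻¹) }

/-- The braid group `B_n` on `n` strands, with `n - 1` generators. -/
abbrev BraidGroup (n : ℕ) := PresentedGroup (braidRels (n - 1))

/-- The standard generators of the braid group. -/
def braidGen {n : ℕ} (i : Fin (n - 1)) : BraidGroup n := PresentedGroup.of i

def finInc {n : ℕ} (i : Fin (n - 1)) : Fin n := ⟨(i : ℕ), by omega⟩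

def finSucc' {n : ℕ} (i : Fin (n - 1)) : Fin n := ⟨(i : ℕ) + 1, by omega⟩

/-- `α : B_n → Aut(F_n)` is Artin's representation if it acts on the generators in
the prescribed way: `α(s_i)(x_i) = x_{i+1}`, `α(s_i)(x_{i+1}) = x_{i+1}⁻¹ x_i x_{i+1}`,
and `α(s_i)(x_j) = x_j` otherwise. -/
def IsArtinRep {n : ℕ} (α : BraidGroup n →* MulAut (FreeGroup (Fin n))) : Prop :=
  ∀ (i : Fin (n - 1)) (j : Fin n),
    α (braidGen i) (FreeGroup.of j) =
      if (j : ℕ) = (i : ℕ) then FreeGroup.of (finSucc' i)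
      else if (j : ℕ) = (i : ℕ) + 1 then
        (FreeGroup.of (finSucc' i))⁻¹ * FreeGroup.of (finInc i) * FreeGroup.of (finSucc' i)
      else FreeGroup.of j

/-- The element `x_1 x_2 ⋯ x_n` of the free group `F_n`. -/
def fullWord (n : ℕ) : FreeGroup (Fin n) :=
  (List.ofFn (fun j : Fin n => FreeGroup.of j)).prod

/-- The central element `z = (s_1 ⋯ s_{n-1})^n` of the braid group `B_n`. -/
def braidZ (n : ℕ) : BraidGroup n :=
  ((List.ofFn (fun i : Fin (n - 1) => braidGen i)).prod) ^ n


section Aux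

lemma braid_rel_gen {n : ℕ} (i j : Fin (n - 1)) (h : (i : ℕ) + 1 = (j : ℕ)) :
    (braidGen i * braidGen j * braidGen i : BraidGroup n) =
    braidGen j * braidGen i * braidGen j := by
  have hmem : (FreeGroup.of i * FreeGroup.of j * FreeGroup.of i *
      (FreeGroup.of j * FreeGroup.of i * FreeGroup.of j)⁻¹ : FreeGroup (Fin (n - 1))) ∈
      braidRels (n - 1) := Or.inl ⟨i, j, h, rfl⟩
  have h1 : ((QuotientGroup.mk (FreeGroup.of i * FreeGroup.of j * FreeGroup.of i *
      (FreeGroup.of j * FreeGroup.of i * FreeGroup.of j)⁻¹ : FreeGroup (Fin (n - 1)))) :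
      BraidGroup n) = 1 :=
    (QuotientGroup.eq_one_iff _).2 (Subgroup.subset_normalClosure hmem)
  rw [QuotientGroup.mk_mul, QuotientGroup.mk_inv, QuotientGroup.mk_mul, QuotientGroup.mk_mul,
    QuotientGroup.mk_mul, QuotientGroup.mk_mul, mul_inv_eq_one] at h1
  exact h1

end Aux

/-- For a 1-cocycle `φ` on `B_n × F_n` for Artin's representation,
`φ(s_i,x_i)·φ(s_i,x_{i+1}) = φ(s_{i+1},x_{i+1})·φ(s_{i+1},x_{i+2})`, i.e. this quantity
takes the same value for all generators. -/
theorem cocycle_relation_two (n : ℕ)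
    (α : BraidGroup n →* MulAut (FreeGroup (Fin n))) (hα : IsArtinRep α)
    (φ : BraidGroup n → FreeGroup (Fin n) → Circle)
    (hc1 : ∀ (a b : BraidGroup n) (x : FreeGroup (Fin n)),
      φ (a * b) x = φ a (α b x) * φ b x)
    (hc2 : ∀ (a : BraidGroup n) (x y : FreeGroup (Fin n)),
      φ a (x * y) = φ a x * φ a y) :
    ∀ (i : ℕ) (hi : i + 1 < n - 1),
      φ (braidGen ⟨i, by omega⟩) (FreeGroup.of ⟨i, by omega⟩)
          * φ (braidGen ⟨i, by omega⟩) (FreeGroup.of ⟨i + 1, by omega⟩)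
        = φ (braidGen ⟨i + 1, hi⟩) (FreeGroup.of ⟨i + 1, by omega⟩)
          * φ (braidGen ⟨i + 1, hi⟩) (FreeGroup.of ⟨i + 2, by omega⟩) := by
  intro i hi
  -- abbreviations
  have hin : i < n - 1 := by omega
  set a : BraidGroup n := braidGen ⟨i, by omega⟩ with ha
  set b : BraidGroup n := braidGen ⟨i + 1, hi⟩ with hb
  set X0 : FreeGroup (Fin n) := FreeGroup.of ⟨i, by omega⟩ with hX0
  set X1 : FreeGroup (Fin n) := FreeGroup.of ⟨i + 1, by omega⟩ with hX1
  set X2 : FreeGroup (Fin n) := FreeGroup.of ⟨i + 2, by omega⟩ with hX2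
  -- basic cocycle facts
  have hone : ∀ c : BraidGroup n, φ c 1 = 1 := by
    intro c
    have := hc2 c 1 1
    simpa using this.symm
  have hinv : ∀ (c : BraidGroup n) (x : FreeGroup (Fin n)), φ c x⁻¹ = (φ c x)⁻¹ := by
    intro c x
    have := hc2 c x x⁻¹
    simp only [mul_inv_cancel, hone] at this
    exact eq_inv_of_mul_eq_one_right this.symm
  -- Artin action values
  have haX0 : α a X0 = X1 := by
    have := hα ⟨i, by omega⟩ ⟨i, by omega⟩
    simpa [ha, hX0, hX1, finSucc'] using this
  have haX1 : α a X1 = X1⁻¹ * X0 * X1 := by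
    have := hα ⟨i, by omega⟩ ⟨i + 1, by omega⟩
    simpa [ha, hX0, hX1, finSucc', finInc] using this
  have haX2 : α a X2 = X2 := by
    have := hα ⟨i, by omega⟩ ⟨i + 2, by omega⟩
    simpa [ha, hX2, show i + 2 ≠ i by omega, show i + 2 ≠ i + 1 by omega] using this
  have hbX0 : α b X0 = X0 := by
    have := hα ⟨i + 1, hi⟩ ⟨i, by omega⟩
    simpa [hb, hX0, show i ≠ i + 1 by omega, show i ≠ i + 1 + 1 by omega] using this
  have hbX1 : α b X1 = X2 := by
    have := hα ⟨i + 1, hi⟩ ⟨i + 1, by omega⟩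
    simpa [hb, hX1, hX2, finSucc'] using this
  have hbX2 : α b X2 = X2⁻¹ * X1 * X2 := by
    have := hα ⟨i + 1, hi⟩ ⟨i + 2, by omega⟩
    simpa [hb, hX1, hX2, finSucc', finInc] using this
  -- braid relation
  have hbr : a * b * a = b * a * b := braid_rel_gen ⟨i, by omega⟩ ⟨i + 1, hi⟩ rfl
  -- expansion lemma
  have hexp : ∀ (c d e : BraidGroup n) (x : FreeGroup (Fin n)),
      φ (c * d * e) x = φ c (α d (α e x)) * φ d (α e x) * φ e x := by
    intro c d e x
    rw [hc1 (c * d) e x, hc1 c d (α e x)]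
  -- first equation, at X0
  have E1 : φ a X2 * φ b X1 * φ a X0 = φ b X1 * φ a X0 * φ b X0 := by
    have h := congrArg (fun g => φ g X0) hbr
    simp only [hexp] at h
    rw [haX0, hbX1, hbX0, haX0] at h
    exact h
  -- second equation, at X1
  have E2 : φ a (X2⁻¹ * X0 * X2) * φ b (X1⁻¹ * X0 * X1) * φ a X1
      = φ b X2 * φ a X2 * φ b X1 := by
    have h := congrArg (fun g => φ g X1) hbr
    simp only [hexp] at h
    rw [haX1] at h
    rw [show α b (X1⁻¹ * X0 * X1) = X2⁻¹ * X0 * X2 by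
      simp [map_mul, map_inv, hbX0, hbX1]] at h
    rw [hbX1, haX2] at h
    exact h
  -- simplify the conjugation terms in E2
  have E2c : φ a X0 * φ b X0 * φ a X1 = φ b X2 * φ a X2 * φ b X1 := by
    rw [← E2, hc2, hc2, hinv, hc2, hc2, hinv, inv_mul_cancel_comm, inv_mul_cancel_comm]
  have hA2 : φ a X2 = φ b X0 :=
    mul_right_cancel (((mul_assoc _ _ _).symm.trans E1).trans (mul_comm _ _))
  have E3 : φ a X2 * (φ a X0 * φ a X1) = φ a X2 * (φ b X1 * φ b X2) := by
    calc φ a X2 * (φ a X0 * φ a X1)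
        = φ a X0 * φ b X0 * φ a X1 := by
          rw [hA2, ← mul_assoc, mul_comm (φ b X0) (φ a X0)]
      _ = φ b X2 * φ a X2 * φ b X1 := E2c
      _ = φ a X2 * (φ b X1 * φ b X2) := by
          rw [mul_comm (φ b X2) (φ a X2), mul_assoc, mul_comm (φ b X2) (φ b X1)]
  exact mul_left_cancel E3
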